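/- Let m > 0 and q ∈ ℝ with 0 < q² ≤ m². Consider the cubic Q with r_* = r_⊛, for which α₃ = r_⊛ is a root, and let ᾱ₁ < ᾱ₂ be its other two real roots. Then r_⊛ ≤ √((r_⊛ − ᾱ₁)(r_⊛ − ᾱ₂)), i.e. the exponent η = r_⊛/√((r_⊛ − ᾱ₁)(r_⊛ − ᾱ₂)) satisfies η ≤ 1, with equality if and only if q² = m². -/

import Mathlib

/-- The metric function `D(r) = 1 - 2m/r + q²/r²` of the Reissner–Nordström spacetime. -/
noncomputable def D (m q r : ℝ) : ℝ := 1 - 2*m/r + q^2/r^2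

/-- The critical radius `r_⊛ = (5m + √(25m² - 24q²))/4`. -/
noncomputable def rcirc (m q : ℝ) : ℝ := (5*m + Real.sqrt (25*m^2 - 24*q^2))/4

/-- The constant `β = 2√(D(r_*))/r_*` associated to the conformal curve starting at `r_*`. -/
noncomputable def betaConst (m q rs : ℝ) : ℝ := 2 * Real.sqrt (D m q rs) / rs

/-- The coefficient `η = (D_* - 1)/β²` of the cubic `Q`. -/
noncomputable def etaCoeff (m q rs : ℝ) : ℝ := (D m q rs - 1) / (betaConst m q rs)^2

/-- The coefficient `ξ = q²/(r_*·β²)` of the cubic `Q`. -/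
noncomputable def xiCoeff (m q rs : ℝ) : ℝ := q^2 / (rs * (betaConst m q rs)^2)

/-- The cubic `Q(x) = x³ + ηx + ξ`. -/
noncomputable def Qcubic (m q rs x : ℝ) : ℝ := x^3 + etaCoeff m q rs * x + xiCoeff m q rs

/-!
The critical radius `r = r_⊛` is a root of `2r² - 5mr + 3q²`. Eliminating `3q²` with this relation
gives `D(r) = (r - m)/(3r)`, and the coefficients of `Q` become rational in `r` and `m`, from which
`Q(r) = 0` is a direct computation. For the other two roots, `(r - ᾱ₁)(r - ᾱ₂) = Q'(r) = 3r² + η₀`,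
which exceeds `r²` by `3r²(2r - 3m)/(4(r - m))`. Since `2r - 3m = (√(25m² - 24q²) - m)/2`, this
excess is nonnegative and vanishes exactly when `q² = m²`.
-/

theorem sub_mul_sub_eq_of_depressed_cubic {R : Type*} [CommRing R] [IsDomain R]
    {p s r a b : R} (hab : a ≠ b) (har : a ≠ r) (hbr : b ≠ r)
    (hr : r ^ 3 + p * r + s = 0) (ha : a ^ 3 + p * a + s = 0) (hb : b ^ 3 + p * b + s = 0) :
    (r - a) * (r - b) = 3 * r ^ 2 + p := by
  have hquot_a : a ^ 2 + a * r + r ^ 2 + p = 0 := by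
    refine (mul_eq_zero.mp ?_).resolve_left (sub_ne_zero.mpr har)
    linear_combination ha - hr
  have hquot_b : b ^ 2 + b * r + r ^ 2 + p = 0 := by
    refine (mul_eq_zero.mp ?_).resolve_left (sub_ne_zero.mpr hbr)
    linear_combination hb - hr
  have hsum : a + b + r = 0 := by
    refine (mul_eq_zero.mp ?_).resolve_left (sub_ne_zero.mpr hab)
    linear_combination hquot_a - hquot_b
  linear_combination (a - r) * hsum - hquot_a

section Coefficients

variable {m q r : ℝ}

theorem betaConst_sq (hD : 0 ≤ D m q r) : betaConst m q r ^ 2 = 4 * D m q r / r ^ 2 := by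
  rw [betaConst, div_pow, mul_pow, Real.sq_sqrt hD]
  norm_num

theorem etaCoeff_eq (hD : 0 ≤ D m q r) :
    etaCoeff m q r = (D m q r - 1) * r ^ 2 / (4 * D m q r) := by
  rw [etaCoeff, betaConst_sq hD, div_div_eq_mul_div]

theorem xiCoeff_eq (hD : 0 ≤ D m q r) : xiCoeff m q r = q ^ 2 * r / (4 * D m q r) := by
  rcases eq_or_ne r 0 with rfl | hr
  · simp [xiCoeff]
  · rw [xiCoeff, betaConst_sq hD, mul_div_assoc', pow_two r, mul_div_mul_left _ _ hr,
      div_div_eq_mul_div]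

variable (hr : 0 < r) (hmr : m < r) (hcrit : 2 * r ^ 2 - 5 * m * r + 3 * q ^ 2 = 0)
include hr hcrit

theorem D_eq_of_crit : D m q r = (r - m) / (3 * r) := by
  rw [D]
  field_simp
  linear_combination hcrit

include hmr

theorem D_pos_of_crit : 0 < D m q r := by
  rw [D_eq_of_crit hr hcrit]
  exact div_pos (sub_pos.mpr hmr) (by positivity)

theorem etaCoeff_eq_of_crit : etaCoeff m q r = -(r ^ 2 * (2 * r + m)) / (4 * (r - m)) := by
  have hrm : r - m ≠ 0 := sub_ne_zero.mpr hmr.ne'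
  rw [etaCoeff_eq (D_pos_of_crit hr hmr hcrit).le, D_eq_of_crit hr hcrit]
  field_simp
  ring

theorem xiCoeff_eq_of_crit : xiCoeff m q r = r ^ 3 * (5 * m - 2 * r) / (4 * (r - m)) := by
  have hrm : r - m ≠ 0 := sub_ne_zero.mpr hmr.ne'
  rw [xiCoeff_eq (D_pos_of_crit hr hmr hcrit).le, D_eq_of_crit hr hcrit]
  field_simp
  linear_combination hcrit

theorem Qcubic_self_of_crit : Qcubic m q r r = 0 := by
  have hrm : r - m ≠ 0 := sub_ne_zero.mpr hmr.ne'
  rw [Qcubic, etaCoeff_eq_of_crit hr hmr hcrit, xiCoeff_eq_of_crit hr hmr hcrit]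
  field_simp
  ring

theorem sub_mul_sub_eq_of_crit {a b : ℝ} (hab : a ≠ b) (har : a ≠ r) (hbr : b ≠ r)
    (ha : Qcubic m q r a = 0) (hb : Qcubic m q r b = 0) :
    (r - a) * (r - b) = r ^ 2 + 3 * r ^ 2 * (2 * r - 3 * m) / (4 * (r - m)) := by
  have hrm : r - m ≠ 0 := sub_ne_zero.mpr hmr.ne'
  rw [sub_mul_sub_eq_of_depressed_cubic hab har hbr (Qcubic_self_of_crit hr hmr hcrit) ha hb,
    etaCoeff_eq_of_crit hr hmr hcrit]
  field_simp
  ring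

end Coefficients

section CriticalRadius

variable {m q : ℝ}

theorem quadratic_rcirc_eq_zero (hq : 24 * q ^ 2 ≤ 25 * m ^ 2) :
    2 * rcirc m q ^ 2 - 5 * m * rcirc m q + 3 * q ^ 2 = 0 := by
  have hs := Real.sq_sqrt (sub_nonneg.mpr hq)
  rw [rcirc]
  linear_combination hs / 8

theorem three_mul_le_two_mul_rcirc (hq : q ^ 2 ≤ m ^ 2) : 3 * m ≤ 2 * rcirc m q := by
  rw [rcirc]
  linarith [Real.le_sqrt_of_sq_le (show m ^ 2 ≤ 25 * m ^ 2 - 24 * q ^ 2 by linarith)]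

theorem two_mul_rcirc_eq_iff (hm : 0 ≤ m) (hq : q ^ 2 ≤ m ^ 2) :
    2 * rcirc m q = 3 * m ↔ q ^ 2 = m ^ 2 := by
  have hdisc : 2 * rcirc m q = 3 * m ↔ Real.sqrt (25 * m ^ 2 - 24 * q ^ 2) = m := by
    rw [rcirc]
    constructor <;> intro h <;> linarith
  rw [hdisc, Real.sqrt_eq_iff_eq_sq (by linarith [sq_nonneg m]) hm]
  constructor <;> intro h <;> linarith

end CriticalRadius

theorem exponent_at_critical_radius_general (m q a b : ℝ) (hm : 0 < m)
    (hq : q^2 ≤ m^2) (hab : a < b)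
    (ha : Qcubic m q (rcirc m q) a = 0) (hb : Qcubic m q (rcirc m q) b = 0)
    (ha' : a ≠ rcirc m q) (hb' : b ≠ rcirc m q) :
    Qcubic m q (rcirc m q) (rcirc m q) = 0
    ∧ rcirc m q ≤ Real.sqrt ((rcirc m q - a) * (rcirc m q - b))
    ∧ rcirc m q / Real.sqrt ((rcirc m q - a) * (rcirc m q - b)) ≤ 1
    ∧ (rcirc m q = Real.sqrt ((rcirc m q - a) * (rcirc m q - b)) ↔ q^2 = m^2) := by
  have h32 := three_mul_le_two_mul_rcirc hq
  set r := rcirc m q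
  have hr : 0 < r := by linarith
  have hmr : m < r := by linarith
  have hcrit := quadratic_rcirc_eq_zero (m := m) (q := q) (by linarith [sq_nonneg m])
  have hP := sub_mul_sub_eq_of_crit hr hmr hcrit hab.ne ha' hb' ha hb
  set gap := 3 * r ^ 2 * (2 * r - 3 * m) / (4 * (r - m))
  have hgap : 0 ≤ gap := div_nonneg (mul_nonneg (by positivity) (by linarith)) (by linarith)
  have hgap_eq : gap = 0 ↔ q ^ 2 = m ^ 2 := by
    rw [← two_mul_rcirc_eq_iff hm.le hq, div_eq_zero_iff,
      or_iff_left (by linarith : 4 * (r - m) ≠ 0), mul_eq_zero, or_iff_right (by positivity),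
      sub_eq_zero]
  have hle : r ≤ Real.sqrt ((r - a) * (r - b)) :=
    (Real.le_sqrt hr.le (by rw [hP]; positivity)).mpr (by rw [hP]; linarith)
  refine ⟨Qcubic_self_of_crit hr hmr hcrit, hle, div_le_one_of_le₀ hle (Real.sqrt_nonneg _), ?_⟩
  rw [eq_comm, Real.sqrt_eq_iff_eq_sq (by rw [hP]; positivity) hr.le, hP, ← hgap_eq]
  constructor <;> intro h <;> linarith

/-- For the cubic `Q` with `r_* = r_⊛` (for which `r_⊛` is a root) and `ᾱ₁ < ᾱ₂` its other
two real roots, one has `r_⊛ ≤ √((r_⊛ - ᾱ₁)(r_⊛ - ᾱ₂))`, i.e. the exponent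
`η = r_⊛/√((r_⊛ - ᾱ₁)(r_⊛ - ᾱ₂))` satisfies `η ≤ 1`, with equality iff `q² = m²`. -/
theorem exponent_at_critical_radius (m q a b : ℝ) (hm : 0 < m) (hq0 : 0 < q^2)
    (hq : q^2 ≤ m^2) (hab : a < b)
    (ha : Qcubic m q (rcirc m q) a = 0) (hb : Qcubic m q (rcirc m q) b = 0)
    (ha' : a ≠ rcirc m q) (hb' : b ≠ rcirc m q) :
    Qcubic m q (rcirc m q) (rcirc m q) = 0
    ∧ rcirc m q ≤ Real.sqrt ((rcirc m q - a) * (rcirc m q - b))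
    ∧ rcirc m q / Real.sqrt ((rcirc m q - a) * (rcirc m q - b)) ≤ 1
    ∧ (rcirc m q = Real.sqrt ((rcirc m q - a) * (rcirc m q - b)) ↔ q^2 = m^2) :=
  exponent_at_critical_radius_general m q a b hm hq hab ha hb ha' hb'
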